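/- For a doubling weight w on ℝⁿ with doubling constant C_w < 3^{np} (doubling with respect to tripling of cubes), one has ∫_{ℝⁿ} (M 1_I(x))^p w(x) dx ≈ w(I) for every cube I, with implied constants independent of I. -/

import Mathlib

/-!
On `I` itself `M 1_I ≥ 1`, which gives the lower bound with `c₁ = 1`. For the upper bound, a cube
containing a point `x ∉ 3^(k+1) I` and meeting `I` has side at least `3^k` times that of `I`, so
`M 1_I(x) ≤ 3^(-nk)` there. Cutting `ℝⁿ` into `3² I` and the annuli `3^(k+2) I \ 3^(k+1) I`, and
bounding `w(3^m I) ≤ C_w^m w(I)` by iterated doubling, the integral is at most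
`C_w² ∑ₖ (C_w 3^(-np))^k w(I)`, a geometric series that converges because `C_w < 3^(np)`.
-/

open MeasureTheory ENNReal

structure Cube (n : ℕ) where
  c : Fin n → ℝ
  r : ℝ
  hr : 0 < r

namespace Cube

def set {n : ℕ} (I : Cube n) : Set (Fin n → ℝ) :=
  {x | ∀ i, I.c i - I.r ≤ x i ∧ x i < I.c i + I.r}

noncomputable def side {n : ℕ} (I : Cube n) : ℝ := 2 * I.r

noncomputable def vol {n : ℕ} (I : Cube n) : ℝ := (2 * I.r) ^ n

def double {n : ℕ} (I : Cube n) : Cube n := ⟨I.c, 2 * I.r, by have := I.hr; linarith⟩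

def triple {n : ℕ} (I : Cube n) : Cube n := ⟨I.c, 3 * I.r, by have := I.hr; linarith⟩

end Cube

noncomputable def poisson {n : ℕ} (I : Cube n) (ω : Measure (Fin n → ℝ)) : ℝ≥0∞ :=
  ∫⁻ x, (ENNReal.ofReal (I.side / (I.side + Metric.infDist x I.set) ^ 2)) ^ n ∂ω

noncomputable def maximal {n : ℕ} (μ : Measure (Fin n → ℝ)) (x : Fin n → ℝ) : ℝ≥0∞ :=
  ⨆ (I : Cube n) (_ : x ∈ I.set), μ I.set / ENNReal.ofReal I.vol

noncomputable def wMass {n : ℕ} (w : (Fin n → ℝ) → ℝ≥0∞) (E : Set (Fin n → ℝ)) : ℝ≥0∞ :=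
  ∫⁻ x in E, w x


noncomputable def maximalIntegral {n : ℕ} (w : (Fin n → ℝ) → ℝ≥0∞) (p : ℝ) (I : Cube n) : ℝ≥0∞ :=
  ∫⁻ x, (maximal (volume.restrict I.set) x) ^ p * w x

namespace Cube

variable {n : ℕ}

lemma set_eq_pi (I : Cube n) :
    I.set = Set.univ.pi fun i => Set.Ico (I.c i - I.r) (I.c i + I.r) := by
  ext x; simp [Cube.set, Set.mem_pi]

lemma measurableSet_set (I : Cube n) : MeasurableSet I.set := by
  rw [set_eq_pi]
  exact MeasurableSet.univ_pi fun _ => measurableSet_Ico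

lemma volume_set (I : Cube n) : volume I.set = ENNReal.ofReal I.vol := by
  rw [set_eq_pi, volume_pi_pi]
  simp only [Real.volume_Ico, add_sub_sub_cancel, ← two_mul, Finset.prod_const,
    Finset.card_univ, Fintype.card_fin]
  rw [Cube.vol, ENNReal.ofReal_pow (by linarith [I.hr])]

lemma vol_pos (I : Cube n) : 0 < I.vol := by
  have := I.hr; unfold Cube.vol; positivity

lemma mem_set_of_dist_lt (I : Cube n) {x : Fin n → ℝ} (hx : dist x I.c < I.r) : x ∈ I.set := by
  intro i
  have := (dist_le_pi_dist x I.c i).trans_lt hx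
  rw [Real.dist_eq, abs_lt] at this
  constructor <;> linarith

lemma dist_le_side (I : Cube n) {x y : Fin n → ℝ} (hx : x ∈ I.set) (hy : y ∈ I.set) :
    dist x y ≤ I.side := by
  refine (dist_pi_le_iff (by unfold side; linarith [I.hr])).2 fun i => ?_
  rw [Real.dist_eq, abs_le, side]
  constructor <;> linarith [hx i, hy i]

lemma sub_le_dist_of_not_mem {I J : Cube n} (hc : I.c = J.c) {x y : Fin n → ℝ}
    (hx : x ∉ J.set) (hy : y ∈ I.set) : J.r - I.r ≤ dist x y := by
  simp only [Cube.set, Set.mem_ofPred_eq, not_forall, not_and_or, not_le, not_lt] at hx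
  obtain ⟨i, hi⟩ := hx
  obtain ⟨hy₁, hy₂⟩ := hy i
  rw [hc] at hy₁ hy₂
  refine le_trans ?_ (dist_le_pi_dist x y i)
  rw [Real.dist_eq]
  rcases hi with hi | hi
  · linarith [neg_abs_le (x i - y i)]
  · linarith [le_abs_self (x i - y i)]

lemma iterate_triple_c (I : Cube n) (m : ℕ) : (triple^[m] I).c = I.c := by
  induction m with
  | zero => rfl
  | succ m ih => rw [Function.iterate_succ_apply', ← ih]; rfl

lemma iterate_triple_r (I : Cube n) (m : ℕ) : (triple^[m] I).r = 3 ^ m * I.r := by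
  induction m with
  | zero => simp
  | succ m ih =>
    rw [Function.iterate_succ_apply', pow_succ, mul_comm _ (3 : ℝ), mul_assoc, ← ih]; rfl

lemma iUnion_iterate_triple_add_set (I : Cube n) (k : ℕ) :
    ⋃ m, (triple^[m + k] I).set = Set.univ := by
  refine Set.eq_univ_of_forall fun x => Set.mem_iUnion.2 ?_
  obtain ⟨m, hm⟩ := pow_unbounded_of_one_lt (dist x I.c / I.r) (by norm_num : (1 : ℝ) < 3)
  refine ⟨m, mem_set_of_dist_lt _ ?_⟩
  rw [iterate_triple_c, iterate_triple_r, ← div_lt_iff₀ I.hr]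
  exact hm.trans_le (pow_le_pow_right₀ (by norm_num) (Nat.le_add_right m k))

end Cube

open Cube

section

variable {n : ℕ}

lemma maximal_le_one (I : Cube n) (x : Fin n → ℝ) : maximal (volume.restrict I.set) x ≤ 1 := by
  refine iSup₂_le fun J _ => ?_
  rw [Measure.restrict_apply J.measurableSet_set, ← J.volume_set]
  exact ENNReal.div_le_of_le_mul (by rw [one_mul]; exact measure_mono Set.inter_subset_left)

lemma one_le_maximal (I : Cube n) {x : Fin n → ℝ} (hx : x ∈ I.set) :
    1 ≤ maximal (volume.restrict I.set) x := by
  refine le_trans (le_of_eq ?_) (le_iSup₂ (f := fun (J : Cube n) (_ : x ∈ J.set) =>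
    volume.restrict I.set J.set / ENNReal.ofReal J.vol) I hx)
  rw [Measure.restrict_apply I.measurableSet_set, Set.inter_self, I.volume_set,
    ENNReal.div_self (ENNReal.ofReal_pos.2 I.vol_pos).ne' ENNReal.ofReal_ne_top]

lemma maximal_le_of_forall_le_dist (I : Cube n) {x : Fin n → ℝ} {t : ℝ} (ht : 0 < t)
    (hfar : ∀ y ∈ I.set, t * I.side ≤ dist x y) :
    maximal (volume.restrict I.set) x ≤ (ENNReal.ofReal t ^ n)⁻¹ := by
  refine iSup₂_le fun J hxJ => ?_
  rw [Measure.restrict_apply J.measurableSet_set]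
  obtain hempty | ⟨y, hyJ, hyI⟩ := (J.set ∩ I.set).eq_empty_or_nonempty
  · simp [hempty]
  have hvol : t ^ n * I.vol ≤ J.vol := by
    rw [Cube.vol, Cube.vol, ← mul_pow]
    exact pow_le_pow_left₀ (by have := I.hr; unfold side; positivity)
      ((hfar y hyI).trans (J.dist_le_side hxJ hyJ)) n
  calc volume (J.set ∩ I.set) / ENNReal.ofReal J.vol
      ≤ ENNReal.ofReal I.vol / ENNReal.ofReal (t ^ n * I.vol) := by
        rw [← I.volume_set]
        exact ENNReal.div_le_div (measure_mono Set.inter_subset_right)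
          (ENNReal.ofReal_le_ofReal hvol)
    _ = (ENNReal.ofReal t ^ n)⁻¹ := by
        rw [ENNReal.ofReal_mul (by positivity), ← ENNReal.ofReal_pow ht.le,
          ENNReal.div_eq_inv_mul, ENNReal.mul_inv (by simp) (by simp), mul_assoc,
          ENNReal.inv_mul_cancel (ENNReal.ofReal_pos.2 I.vol_pos).ne' ENNReal.ofReal_ne_top,
          mul_one]

lemma maximal_le_of_not_mem_iterate_triple (I : Cube n) {x : Fin n → ℝ} (k : ℕ)
    (hx : x ∉ (triple^[k + 1] I).set) :
    maximal (volume.restrict I.set) x ≤ ((3 : ℝ≥0∞) ^ n)⁻¹ ^ k := by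
  have hfar : ∀ y ∈ I.set, 3 ^ k * I.side ≤ dist x y := fun y hy => by
    have h := sub_le_dist_of_not_mem (I.iterate_triple_c (k + 1)).symm hx hy
    have h3k : (1 : ℝ) ≤ 3 ^ k := one_le_pow₀ (by norm_num)
    rw [iterate_triple_r, pow_succ] at h
    unfold side
    nlinarith [I.hr]
  refine (maximal_le_of_forall_le_dist I (by positivity) hfar).trans_eq ?_
  rw [ENNReal.ofReal_pow (by norm_num), ENNReal.ofReal_ofNat, ← pow_mul, mul_comm, pow_mul,
    ENNReal.inv_pow]

lemma rpow_maximal_le_of_mem_disjointed (I : Cube n) {p : ℝ} (hp : 0 ≤ p) {x : Fin n → ℝ}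
    {j : ℕ} (hx : x ∈ disjointed (fun k => (triple^[k + 2] I).set) j) :
    maximal (volume.restrict I.set) x ^ p ≤ ((3 : ℝ≥0∞) ^ ((n : ℝ) * p))⁻¹ ^ j := by
  have hmax : maximal (volume.restrict I.set) x ≤ ((3 : ℝ≥0∞) ^ n)⁻¹ ^ j := by
    cases j with
    | zero => simpa using maximal_le_one I x
    | succ i =>
      rw [disjointed_eq_inter_compl] at hx
      have hi := Set.mem_iInter₂.1 hx.2 i (Nat.lt_succ_self i)
      exact maximal_le_of_not_mem_iterate_triple I (i + 1) hi
  refine (ENNReal.rpow_le_rpow hmax hp).trans_eq ?_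
  rw [← ENNReal.rpow_natCast, ← ENNReal.rpow_mul, mul_comm, ENNReal.rpow_mul, ENNReal.rpow_natCast,
    ENNReal.inv_rpow, ENNReal.rpow_natCast_mul]

lemma wMass_iterate_triple_le {w : (Fin n → ℝ) → ℝ≥0∞} {C : ℝ≥0∞}
    (hdoubling : ∀ I : Cube n, wMass w I.triple.set ≤ C * wMass w I.set) (I : Cube n) (m : ℕ) :
    wMass w (triple^[m] I).set ≤ C ^ m * wMass w I.set := by
  induction m with
  | zero => simp
  | succ m ih =>
    rw [Function.iterate_succ_apply', pow_succ', mul_assoc]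
    exact (hdoubling _).trans (mul_le_mul_right ih C)

lemma wMass_le_maximalIntegral (w : (Fin n → ℝ) → ℝ≥0∞) {p : ℝ} (hp : 0 ≤ p) (I : Cube n) :
    wMass w I.set ≤ maximalIntegral w p I := by
  refine le_trans ?_ (setLIntegral_le_lintegral I.set _)
  refine setLIntegral_mono' I.measurableSet_set fun x hx => ?_
  calc w x = 1 ^ p * w x := by rw [ENNReal.one_rpow, one_mul]
    _ ≤ _ := mul_le_mul_left (ENNReal.rpow_le_rpow (one_le_maximal I hx) hp) _

lemma maximalIntegral_le {w : (Fin n → ℝ) → ℝ≥0∞} {p : ℝ} (hp : 0 ≤ p) {C : ℝ≥0∞}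
    (hdoubling : ∀ I : Cube n, wMass w I.triple.set ≤ C * wMass w I.set) (I : Cube n) :
    maximalIntegral w p I
      ≤ C ^ 2 * (1 - C * ((3 : ℝ≥0∞) ^ ((n : ℝ) * p))⁻¹)⁻¹ * wMass w I.set := by
  set ρ := ((3 : ℝ≥0∞) ^ ((n : ℝ) * p))⁻¹
  -- `disjointed A` cuts `ℝⁿ` into `3² I` and the annuli `3^(k+2) I \ 3^(k+1) I`.
  set A := fun k => (triple^[k + 2] I).set
  have hρ : ρ ≠ ⊤ := ENNReal.inv_ne_top.2 (ENNReal.rpow_pos (by norm_num) (by norm_num)).ne'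
  have hA : ⋃ k, disjointed A k = Set.univ := by
    rw [iUnion_disjointed]
    exact I.iUnion_iterate_triple_add_set 2
  calc maximalIntegral w p I
      = ∫⁻ x in ⋃ k, disjointed A k, maximal (volume.restrict I.set) x ^ p * w x := by
        rw [hA, Measure.restrict_univ]; rfl
    _ ≤ ∑' k, ∫⁻ x in disjointed A k, maximal (volume.restrict I.set) x ^ p * w x :=
        lintegral_iUnion_le _ _
    _ ≤ ∑' k, ρ ^ k * wMass w (A k) := ENNReal.tsum_le_tsum fun k => by
        calc _ ≤ ∫⁻ x in disjointed A k, ρ ^ k * w x :=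
              setLIntegral_mono' (MeasurableSet.disjointed (fun _ => measurableSet_set _) k)
                fun x hx => mul_le_mul_left (rpow_maximal_le_of_mem_disjointed I hp hx) _
          _ ≤ ρ ^ k * wMass w (A k) := by
              rw [lintegral_const_mul' _ _ (ENNReal.pow_ne_top hρ)]
              exact mul_le_mul_right (lintegral_mono_set (disjointed_subset A k)) _
    _ ≤ ∑' k, C ^ 2 * wMass w I.set * (C * ρ) ^ k := ENNReal.tsum_le_tsum fun k => by
        calc ρ ^ k * wMass w (A k) ≤ ρ ^ k * (C ^ (k + 2) * wMass w I.set) :=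
              mul_le_mul_right (wMass_iterate_triple_le hdoubling I (k + 2)) _
          _ = C ^ 2 * wMass w I.set * (C * ρ) ^ k := by ring
    _ = C ^ 2 * (1 - C * ρ)⁻¹ * wMass w I.set := by
        rw [ENNReal.tsum_mul_left, ENNReal.tsum_geometric]; ring

end

theorem stmt_1_general (n : ℕ) (p : ℝ) (hp : 1 < p)
    (w : (Fin n → ℝ) → ℝ≥0∞)
    (Cw : ℝ) (hCwsmall : Cw < (3 : ℝ) ^ ((n : ℝ) * p))
    (hdoubling : ∀ I : Cube n, wMass w I.triple.set ≤ ENNReal.ofReal Cw * wMass w I.set) :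
    ∃ c₁ > (0:ℝ), ∃ c₂ > (0:ℝ), ∀ I : Cube n,
      ENNReal.ofReal c₁ * wMass w I.set ≤ maximalIntegral w p I ∧
      maximalIntegral w p I ≤ ENNReal.ofReal c₂ * wMass w I.set := by
  set C := ENNReal.ofReal Cw
  set B := C ^ 2 * (1 - C * ((3 : ℝ≥0∞) ^ ((n : ℝ) * p))⁻¹)⁻¹
  have hratio : C * ((3 : ℝ≥0∞) ^ ((n : ℝ) * p))⁻¹ < 1 := by
    rw [← div_eq_mul_inv, ENNReal.div_lt_iff (by simp) (by simp), one_mul, ← ENNReal.ofReal_ofNat,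
      ENNReal.ofReal_rpow_of_pos (by norm_num)]
    exact (ENNReal.ofReal_lt_ofReal_iff (by positivity)).2 hCwsmall
  have hB : B ≠ ⊤ := ENNReal.mul_ne_top (by simp [C])
    (ENNReal.inv_ne_top.2 (tsub_pos_of_lt hratio).ne')
  refine ⟨1, one_pos, B.toReal + 1, by positivity, fun I => ⟨?_, ?_⟩⟩
  · simpa using wMass_le_maximalIntegral w (by linarith) I
  · refine (maximalIntegral_le (by linarith) hdoubling I).trans (mul_le_mul_left ?_ _)
    exact (ENNReal.le_ofReal_iff_toReal_le hB (by positivity)).2 (by linarith)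

/-- For a doubling weight `w` with (tripling) doubling constant `C_w < 3^{np}`,
one has `∫ (M 1_I)^p w dx ≈ w(I)` uniformly in the cube `I`. -/
theorem stmt_1 (n : ℕ) (hn : 0 < n) (p : ℝ) (hp : 1 < p)
    (w : (Fin n → ℝ) → ℝ≥0∞) (hw : Measurable w)
    (hloc : ∀ I : Cube n, wMass w I.set < ⊤)
    (Cw : ℝ) (hCw : 0 < Cw) (hCwsmall : Cw < (3 : ℝ) ^ ((n : ℝ) * p))
    (hdoubling : ∀ I : Cube n, wMass w I.triple.set ≤ ENNReal.ofReal Cw * wMass w I.set) :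
    ∃ c₁ > (0:ℝ), ∃ c₂ > (0:ℝ), ∀ I : Cube n,
      ENNReal.ofReal c₁ * wMass w I.set ≤ maximalIntegral w p I ∧
      maximalIntegral w p I ≤ ENNReal.ofReal c₂ * wMass w I.set :=
  stmt_1_general n p hp w Cw hCwsmall hdoubling
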